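/- arXiv:2311.14168 — 3 statements merged into one kernel-verified Lean document; each statement's English description precedes it below -/
import Mathlib

section
/- Let k be a positive integer, M ∈ ℝ^{k×k} a symmetric positive definite matrix, b ∈ ℝ^k, and τ > 0. Define p*: ℝ^k → ℝ as the Gaussian density with mean −(1/2)M⁻¹b and covariance (τ/2)M⁻¹, i.e. p*(u) = ((2π)^k det((τ/2)M⁻¹))^{−1/2} · exp(−(1/τ)(u + (1/2)M⁻¹b)ᵀ M (u + (1/2)M⁻¹b)). Then for every measurable function p: ℝ^k → [0,∞) with ∫_{ℝ^k} p(u) du = 1 and such that u ↦ (uᵀMu + bᵀu + τ·log p(u))·p(u) is Lebesgue integrable (with the convention 0·log 0 = 0), one has ∫_{ℝ^k} (uᵀMu + bᵀu + τ log p(u)) p(u) du ≥ ∫_{ℝ^k} (uᵀMu + bᵀu + τ log p*(u)) p*(u) du. -/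
open Matrix MeasureTheory

/-- The Gaussian density on `ℝ^k` with mean `-(1/2) M⁻¹ b` and covariance `(τ/2) M⁻¹`. -/
noncomputable def pstar (k : ℕ) (M : Matrix (Fin k) (Fin k) ℝ) (b : Fin k → ℝ) (τ : ℝ)
    (u : Fin k → ℝ) : ℝ :=
  ((2 * Real.pi) ^ k * Matrix.det ((τ / 2) • M⁻¹)) ^ (-(1 / 2 : ℝ)) *
    Real.exp (-(1 / τ) *
      ((u + (1 / 2 : ℝ) • M⁻¹.mulVec b) ⬝ᵥ M.mulVec (u + (1 / 2 : ℝ) • M⁻¹.mulVec b)))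

/-! Completing the square shows that `uᵀMu + bᵀu + τ log p*(u)` is a constant `C`, so the cost
of a density `p` is `C + τ KL(p ‖ p*)`, and Gibbs' inequality `KL(p ‖ p*) ≥ 0` (pointwise,
`log x ≤ x - 1`) leaves `C`, the cost of `p*`. That `p*` is a probability density is the Gaussian
integral, computed by writing `M = SᵀS` and changing variables `v = S u`. -/

open Real

section Gibbs

variable {α : Type*} [MeasurableSpace α] {μ : Measure α}

lemma sub_le_log_sub_log_mul {x y : ℝ} (hx : 0 ≤ x) (hy : 0 < y) :
    x - y ≤ (log x - log y) * x := by
  rcases hx.eq_or_lt with rfl | hx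
  · simpa using hy.le
  have h := log_le_sub_one_of_pos (div_pos hy hx)
  rw [log_div hy.ne' hx.ne'] at h
  have h' := mul_le_mul_of_nonneg_right h hx.le
  rw [sub_one_mul, div_mul_cancel₀ _ hx.ne'] at h'
  linarith

lemma integral_sub_le_integral_log_sub_log_mul {p q : α → ℝ} (hp : ∀ a, 0 ≤ p a)
    (hq : ∀ a, 0 < q a) (hp_int : Integrable p μ) (hq_int : Integrable q μ)
    (hpq : Integrable (fun a ↦ (log (p a) - log (q a)) * p a) μ) :
    ∫ a, p a ∂μ - ∫ a, q a ∂μ ≤ ∫ a, (log (p a) - log (q a)) * p a ∂μ := by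
  rw [← integral_sub hp_int hq_int]
  exact integral_mono (hp_int.sub hq_int) hpq fun a ↦ sub_le_log_sub_log_mul (hp a) (hq a)

theorem integral_add_mul_log_mul_le_of_add_mul_log_eq {V p q : α → ℝ} {τ C : ℝ} (hτ : 0 < τ)
    (hq : ∀ a, 0 < q a) (hq_int : Integrable q μ) (hq_one : ∫ a, q a ∂μ = 1)
    (hVq : ∀ a, V a + τ * log (q a) = C) (hp : ∀ a, 0 ≤ p a) (hp_one : ∫ a, p a ∂μ = 1)
    (hVp : Integrable (fun a ↦ (V a + τ * log (p a)) * p a) μ) :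
    ∫ a, (V a + τ * log (q a)) * q a ∂μ ≤ ∫ a, (V a + τ * log (p a)) * p a ∂μ := by
  have hp_int : Integrable p μ := .of_integral_ne_zero (by simp [hp_one])
  have hsplit : ∀ a, (V a + τ * log (p a)) * p a = C * p a + τ * ((log (p a) - log (q a)) * p a) :=
    fun a ↦ by rw [← hVq a]; ring
  have hpq : Integrable (fun a ↦ (log (p a) - log (q a)) * p a) μ := by
    refine ((hVp.sub (hp_int.const_mul C)).const_mul τ⁻¹).congr (.of_forall fun a ↦ ?_)
    simp only [Pi.sub_apply, hsplit]
    field_simp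
    ring
  have hgibbs := integral_sub_le_integral_log_sub_log_mul hp hq hp_int hq_int hpq
  rw [hp_one, hq_one, sub_self] at hgibbs
  calc ∫ a, (V a + τ * log (q a)) * q a ∂μ = C := by
        simp only [hVq]
        rw [integral_const_mul, hq_one, mul_one]
    _ ≤ C + τ * ∫ a, (log (p a) - log (q a)) * p a ∂μ :=
        le_add_of_nonneg_right (mul_nonneg hτ.le hgibbs)
    _ = ∫ a, (V a + τ * log (p a)) * p a ∂μ := by
        simp only [hsplit]
        rw [integral_add (hp_int.const_mul C) (hpq.const_mul τ), integral_const_mul,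
          integral_const_mul, hp_one, mul_one]

end Gibbs

section Gaussian

variable {ι : Type*} [Fintype ι]

lemma exp_neg_mul_dotProduct_self (c : ℝ) (v : ι → ℝ) :
    exp (-c * (v ⬝ᵥ v)) = ∏ i, exp (-c * v i ^ 2) := by
  simp only [dotProduct, Finset.mul_sum, exp_sum, sq]

lemma integrable_exp_neg_mul_dotProduct_self {c : ℝ} (hc : 0 < c) :
    Integrable fun v : ι → ℝ ↦ exp (-c * (v ⬝ᵥ v)) := by
  simp only [exp_neg_mul_dotProduct_self]
  exact Integrable.fintype_prod (f := fun _ x ↦ exp (-c * x ^ 2)) fun _ ↦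
    integrable_exp_neg_mul_sq hc

lemma integral_exp_neg_mul_dotProduct_self (c : ℝ) :
    ∫ v : ι → ℝ, exp (-c * (v ⬝ᵥ v)) = √(π / c) ^ Fintype.card ι := by
  simp only [exp_neg_mul_dotProduct_self]
  rw [integral_fintype_prod_volume_eq_pow (fun x ↦ exp (-c * x ^ 2)), integral_gaussian]

lemma Matrix.dotProduct_transpose_mul_self_mulVec (S : Matrix ι ι ℝ) (u : ι → ℝ) :
    u ⬝ᵥ (Sᵀ * S) *ᵥ u = S *ᵥ u ⬝ᵥ S *ᵥ u := by
  rw [← mulVec_mulVec, dotProduct_mulVec, vecMul_transpose]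

variable [DecidableEq ι] {A : Matrix ι ι ℝ} {E : Type*} [NormedAddCommGroup E]

lemma Matrix.measurableEmbedding_toLin' (hA : A.det ≠ 0) : MeasurableEmbedding (toLin' A) :=
  ((toLin' A).equivOfDetNeZero (by rwa [LinearMap.det_toLin'])).toContinuousLinearEquiv
    |>.toHomeomorph.measurableEmbedding

lemma Matrix.integrable_comp_mulVec_iff (hA : A.det ≠ 0) {f : (ι → ℝ) → E} :
    Integrable (fun u ↦ f (A *ᵥ u)) ↔ Integrable f := by
  symm
  rw [← integrable_smul_measure (c := ENNReal.ofReal |A.det⁻¹|) (by simpa using hA) (by simp),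
    ← Real.map_matrix_volume_pi_eq_smul_volume_pi hA,
    (measurableEmbedding_toLin' hA).integrable_map_iff]
  rfl

lemma Matrix.integral_comp_mulVec [NormedSpace ℝ E] (hA : A.det ≠ 0) (f : (ι → ℝ) → E) :
    ∫ u, f (A *ᵥ u) = |A.det|⁻¹ • ∫ v, f v := by
  have h := (measurableEmbedding_toLin' hA).integral_map (μ := volume) f
  simp only [toLin'_apply] at h
  rw [← h, Real.map_matrix_volume_pi_eq_smul_volume_pi hA,
    integral_smul_measure, ENNReal.toReal_ofReal (abs_nonneg _), abs_inv]

open scoped MatrixOrder in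
lemma Matrix.PosDef.exists_isUnit_eq_transpose_mul_self {M : Matrix ι ι ℝ} (hM : M.PosDef) :
    ∃ S : Matrix ι ι ℝ, IsUnit S ∧ M = Sᵀ * S := by
  simpa [star_eq_conjTranspose] using
    CStarAlgebra.isStrictlyPositive_iff_eq_star_mul_self.mp hM.isStrictlyPositive

variable {M : Matrix ι ι ℝ} {c : ℝ}

lemma Matrix.PosDef.integrable_exp_neg_mul_dotProduct_mulVec (hM : M.PosDef) (hc : 0 < c) :
    Integrable fun u : ι → ℝ ↦ exp (-c * (u ⬝ᵥ M *ᵥ u)) := by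
  obtain ⟨S, hS, rfl⟩ := hM.exists_isUnit_eq_transpose_mul_self
  simp only [dotProduct_transpose_mul_self_mulVec]
  exact (integrable_comp_mulVec_iff ((isUnit_iff_isUnit_det S).mp hS).ne_zero
    (f := fun v ↦ exp (-c * (v ⬝ᵥ v)))).mpr (integrable_exp_neg_mul_dotProduct_self hc)

lemma Matrix.PosDef.integral_exp_neg_mul_dotProduct_mulVec (hM : M.PosDef) (c : ℝ) :
    ∫ u : ι → ℝ, exp (-c * (u ⬝ᵥ M *ᵥ u)) = √(π / c) ^ Fintype.card ι / √M.det := by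
  obtain ⟨S, hS, rfl⟩ := hM.exists_isUnit_eq_transpose_mul_self
  simp only [dotProduct_transpose_mul_self_mulVec]
  rw [integral_comp_mulVec ((isUnit_iff_isUnit_det S).mp hS).ne_zero
    (fun v ↦ exp (-c * (v ⬝ᵥ v))), integral_exp_neg_mul_dotProduct_self, det_mul, det_transpose,
    ← sq, sqrt_sq_eq_abs, smul_eq_mul, inv_mul_eq_div]

end Gaussian

lemma Matrix.IsSymm.dotProduct_mulVec_add_half_inv_mulVec {ι : Type*} [Fintype ι] [DecidableEq ι]
    {M : Matrix ι ι ℝ} (hM : M.IsSymm) (hdet : IsUnit M.det) (b u : ι → ℝ) :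
    (u + (1 / 2 : ℝ) • M⁻¹ *ᵥ b) ⬝ᵥ M *ᵥ (u + (1 / 2 : ℝ) • M⁻¹ *ᵥ b) =
      u ⬝ᵥ M *ᵥ u + b ⬝ᵥ u + b ⬝ᵥ M⁻¹ *ᵥ b / 4 := by
  have hMm : M *ᵥ ((1 / 2 : ℝ) • M⁻¹ *ᵥ b) = (1 / 2 : ℝ) • b := by
    rw [mulVec_smul, mulVec_mulVec, mul_nonsing_inv M hdet, one_mulVec]
  have hsymm : ∀ v w : ι → ℝ, v ⬝ᵥ M *ᵥ w = w ⬝ᵥ M *ᵥ v := fun v w ↦ by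
    rw [dotProduct_mulVec, ← mulVec_transpose, hM.eq, dotProduct_comm]
  rw [mulVec_add, dotProduct_add, add_dotProduct, add_dotProduct, hsymm (_ • _) u, hMm]
  simp only [dotProduct_smul, smul_dotProduct, smul_eq_mul, dotProduct_comm u b,
    dotProduct_comm (M⁻¹ *ᵥ b) b]
  ring

section pstar

variable {k : ℕ} {M : Matrix (Fin k) (Fin k) ℝ} {b : Fin k → ℝ} {τ : ℝ}

lemma two_pi_pow_mul_det_smul_inv_rpow_neg_half (hM : M.PosDef) (hτ : 0 < τ) :
    ((2 * π) ^ k * det ((τ / 2) • M⁻¹)) ^ (-(1 / 2 : ℝ)) = √M.det / √(π * τ) ^ k := by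
  have hdet := hM.det_pos
  have hpow : √((π * τ) ^ k) = √(π * τ) ^ k := by
    rw [← sq_sqrt (by positivity : 0 ≤ π * τ), ← pow_mul, pow_mul',
      sqrt_sq (by positivity), sqrt_sq (by positivity)]
  rw [det_smul, det_nonsing_inv, Ring.inverse_eq_inv', Fintype.card_fin, ← mul_assoc, ← mul_pow,
    show 2 * π * (τ / 2) = π * τ by ring, rpow_neg (by positivity), ← sqrt_eq_rpow,
    sqrt_mul (by positivity), sqrt_inv, hpow, mul_inv, inv_inv, div_eq_mul_inv, mul_comm]

lemma pstar_pos (hM : M.PosDef) (hτ : 0 < τ) (u : Fin k → ℝ) : 0 < pstar k M b τ u := by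
  have hdet := hM.det_pos
  rw [pstar, two_pi_pow_mul_det_smul_inv_rpow_neg_half hM hτ]
  positivity

lemma integrable_pstar (hM : M.PosDef) (hτ : 0 < τ) : Integrable (pstar k M b τ) :=
  ((hM.integrable_exp_neg_mul_dotProduct_mulVec (one_div_pos.mpr hτ)).comp_add_right _).const_mul _

lemma integral_pstar (hM : M.PosDef) (hτ : 0 < τ) : ∫ u, pstar k M b τ u = 1 := by
  have hdet := hM.det_pos
  simp only [pstar]
  rw [integral_const_mul, integral_add_right_eq_self (fun u ↦ exp (-(1 / τ) * (u ⬝ᵥ M *ᵥ u))),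
    hM.integral_exp_neg_mul_dotProduct_mulVec, two_pi_pow_mul_det_smul_inv_rpow_neg_half hM hτ,
    Fintype.card_fin, one_div τ, div_inv_eq_mul]
  field_simp

lemma dotProduct_mulVec_add_dotProduct_add_mul_log_pstar (hM : M.PosDef) (hτ : 0 < τ)
    (u : Fin k → ℝ) :
    u ⬝ᵥ M *ᵥ u + b ⬝ᵥ u + τ * log (pstar k M b τ u) =
      τ * log (√M.det / √(π * τ) ^ k) - b ⬝ᵥ M⁻¹ *ᵥ b / 4 := by
  have hdet := hM.det_pos
  have hsymm : M.IsSymm := isHermitian_iff_isSymm.mp hM.isHermitian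
  rw [pstar, two_pi_pow_mul_det_smul_inv_rpow_neg_half hM hτ,
    log_mul (by positivity) (exp_ne_zero _), log_exp,
    hsymm.dotProduct_mulVec_add_half_inv_mulVec hdet.ne'.isUnit]
  field_simp
  ring

end pstar

theorem stmt0_general (k : ℕ) (M : Matrix (Fin k) (Fin k) ℝ) (hM : M.PosDef)
    (b : Fin k → ℝ) (τ : ℝ) (hτ : 0 < τ)
    (p : (Fin k → ℝ) → ℝ) (hp_nonneg : ∀ u, 0 ≤ p u)
    (hp_prob : (∫ u : Fin k → ℝ, p u) = 1)
    (hp_int : Integrable (fun u : Fin k → ℝ =>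
      (u ⬝ᵥ M.mulVec u + b ⬝ᵥ u + τ * Real.log (p u)) * p u)) :
    (∫ u : Fin k → ℝ, (u ⬝ᵥ M.mulVec u + b ⬝ᵥ u + τ * Real.log (p u)) * p u) ≥
      ∫ u : Fin k → ℝ,
        (u ⬝ᵥ M.mulVec u + b ⬝ᵥ u + τ * Real.log (pstar k M b τ u)) * pstar k M b τ u := by
  exact integral_add_mul_log_mul_le_of_add_mul_log_eq hτ (pstar_pos hM hτ) (integrable_pstar hM hτ)
    (integral_pstar hM hτ) (dotProduct_mulVec_add_dotProduct_add_mul_log_pstar hM hτ) hp_nonneg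
    hp_prob hp_int

/-- The Gaussian `pstar` minimizes the entropy-regularized one-step cost
`∫ (uᵀMu + bᵀu + τ log p(u)) p(u) du` over probability densities `p` on `ℝ^k`. -/
theorem stmt0 (k : ℕ) (hk : 0 < k) (M : Matrix (Fin k) (Fin k) ℝ) (hM : M.PosDef)
    (b : Fin k → ℝ) (τ : ℝ) (hτ : 0 < τ)
    (p : (Fin k → ℝ) → ℝ) (hp_meas : Measurable p) (hp_nonneg : ∀ u, 0 ≤ p u)
    (hp_prob : (∫ u : Fin k → ℝ, p u) = 1)
    (hp_int : Integrable (fun u : Fin k → ℝ =>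
      (u ⬝ᵥ M.mulVec u + b ⬝ᵥ u + τ * Real.log (p u)) * p u)) :
    (∫ u : Fin k → ℝ, (u ⬝ᵥ M.mulVec u + b ⬝ᵥ u + τ * Real.log (p u)) * p u) ≥
      ∫ u : Fin k → ℝ,
        (u ⬝ᵥ M.mulVec u + b ⬝ᵥ u + τ * Real.log (pstar k M b τ u)) * pstar k M b τ u :=
  stmt0_general k M hM b τ hτ p hp_nonneg hp_prob hp_int
end

section
/- (Boundedness of the covariance update of RPG.) Let K ∈ ℝ^{k×n} be stable, let Σ ∈ ℝ^{k×k} be symmetric positive definite with Σ ⪯ I, and write M := R + γBᵀP_K B. Fix τ ∈ (0, 2σ_min(R)], a ∈ (0, min{ τ/(2‖M‖), σ_min(Σ) }), and a step size η with 0 < η ≤ 2(1−γ)a²/τ. Define Σ' := Σ − (η/(1−γ))·Σ·(M − (τ/2)Σ⁻¹)·Σ. Then aI ⪯ Σ' ⪯ I. -/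
open Matrix


noncomputable def spec {m l : ℕ} (M : Matrix (Fin m) (Fin l) ℝ) : ℝ :=
  ‖LinearMap.toContinuousLinearMap (Matrix.toEuclideanLin M)‖

noncomputable def sigMin {m l : ℕ} (M : Matrix (Fin m) (Fin l) ℝ) : ℝ :=
  sInf {r : ℝ | ∃ x : EuclideanSpace ℝ (Fin l), ‖x‖ = 1 ∧
    r = ‖LinearMap.toContinuousLinearMap (Matrix.toEuclideanLin M) x‖}

noncomputable def frob {m l : ℕ} (M : Matrix (Fin m) (Fin l) ℝ) : ℝ :=
  Real.sqrt (Matrix.trace (Mᵀ * M))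

def loewner {m : ℕ} (X Y : Matrix (Fin m) (Fin m) ℝ) : Prop :=
  (Y - X).PosSemidef

noncomputable def Pmat {n k : ℕ} (γ : ℝ) (A : Matrix (Fin n) (Fin n) ℝ)
    (B : Matrix (Fin n) (Fin k) ℝ) (Q : Matrix (Fin n) (Fin n) ℝ)
    (R : Matrix (Fin k) (Fin k) ℝ) (K : Matrix (Fin k) (Fin n) ℝ) :
    Matrix (Fin n) (Fin n) ℝ :=
  ∑' t : ℕ, γ ^ t • (((A - B * K)ᵀ) ^ t * (Q + Kᵀ * R * K) * (A - B * K) ^ t)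

noncomputable def Emat {n k : ℕ} (γ : ℝ) (A : Matrix (Fin n) (Fin n) ℝ)
    (B : Matrix (Fin n) (Fin k) ℝ) (Q : Matrix (Fin n) (Fin n) ℝ)
    (R : Matrix (Fin k) (Fin k) ℝ) (K : Matrix (Fin k) (Fin n) ℝ) :
    Matrix (Fin k) (Fin n) ℝ :=
  -(γ • (Bᵀ * Pmat γ A B Q R K * (A - B * K))) + R * K

noncomputable def Smat {n k : ℕ} (γ : ℝ) (A : Matrix (Fin n) (Fin n) ℝ)
    (B : Matrix (Fin n) (Fin k) ℝ) (W : Matrix (Fin n) (Fin n) ℝ)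
    (D₀ : Matrix (Fin n) (Fin n) ℝ) (K : Matrix (Fin k) (Fin n) ℝ)
    (Sg : Matrix (Fin k) (Fin k) ℝ) : Matrix (Fin n) (Fin n) ℝ :=
  ∑' t : ℕ, γ ^ t •
    ((A - B * K) ^ t * D₀ * ((A - B * K)ᵀ) ^ t +
      ∑ s ∈ Finset.Icc 1 t,
        (A - B * K) ^ (t - s) * (B * Sg * Bᵀ + W) * ((A - B * K)ᵀ) ^ (t - s))

noncomputable def Cost {n k : ℕ} (γ τ : ℝ) (A : Matrix (Fin n) (Fin n) ℝ)
    (B : Matrix (Fin n) (Fin k) ℝ) (Q : Matrix (Fin n) (Fin n) ℝ)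
    (R : Matrix (Fin k) (Fin k) ℝ) (W : Matrix (Fin n) (Fin n) ℝ)
    (D₀ : Matrix (Fin n) (Fin n) ℝ) (K : Matrix (Fin k) (Fin n) ℝ)
    (Sg : Matrix (Fin k) (Fin k) ℝ) : ℝ :=
  Matrix.trace (D₀ * Pmat γ A B Q R K) +
    (1 / (1 - γ)) *
      (Matrix.trace (Sg * (R + γ • (Bᵀ * Pmat γ A B Q R K * B))) -
        (τ / 2) * ((k : ℝ) + Real.log ((2 * Real.pi) ^ k * Sg.det)) +
        γ * Matrix.trace (W * Pmat γ A B Q R K))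

noncomputable def fent {n k : ℕ} (γ τ : ℝ) (A : Matrix (Fin n) (Fin n) ℝ)
    (B : Matrix (Fin n) (Fin k) ℝ) (Q : Matrix (Fin n) (Fin n) ℝ)
    (R : Matrix (Fin k) (Fin k) ℝ) (K : Matrix (Fin k) (Fin n) ℝ)
    (Sg : Matrix (Fin k) (Fin k) ℝ) : ℝ :=
  (τ / (2 * (1 - γ))) * Real.log Sg.det -
    (1 / (1 - γ)) * Matrix.trace (Sg * (R + γ • (Bᵀ * Pmat γ A B Q R K * B)))
/-!
Write `c = η / (1 - γ)`, `t = τ / 2` and `m = ‖M‖`. Since `Σ` is invertible, the update is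
`Σ' = Σ - c • Σ M Σ + (c t) • Σ`. Sandwiching `t • I ⪯ M ⪯ m • I` between two copies of the
symmetric matrix `Σ` bounds `Σ'` between two quadratic polynomials in `Σ`, so both bounds reduce,
by the spectral theorem, to scalar inequalities on the eigenvalues `x ∈ [a, 1]` of `Σ`:
`x + c t x (1 - x) ≤ 1` because `c t ≤ a² ≤ 1`, and
`(1 + c t) x - c m x² - a ≥ (x - a) (1 - c m x) ≥ 0` because `m a ≤ t` forces `c m ≤ a`.
-/

open scoped MatrixOrder

section Spectral

variable {n : Type*} [Fintype n] [DecidableEq n] {S : Matrix n n ℝ}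

lemma Matrix.IsHermitian.le_smul_one_iff (hS : S.IsHermitian) {r : ℝ} :
    S ≤ r • 1 ↔ ∀ i, hS.eigenvalues i ≤ r := by
  rw [← Algebra.algebraMap_eq_smul_one, le_algebraMap_iff_spectrum_le hS.isSelfAdjoint,
    hS.spectrum_real_eq_range_eigenvalues, Set.forall_mem_range]

lemma Matrix.IsHermitian.smul_one_le_iff (hS : S.IsHermitian) {r : ℝ} :
    r • 1 ≤ S ↔ ∀ i, r ≤ hS.eigenvalues i := by
  rw [← Algebra.algebraMap_eq_smul_one, algebraMap_le_iff_le_spectrum hS.isSelfAdjoint,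
    hS.spectrum_real_eq_range_eigenvalues, Set.forall_mem_range]

lemma Matrix.IsHermitian.cfc_quadratic (hS : S.IsHermitian) (p q : ℝ) :
    cfc (fun x : ℝ => p * x + q * x ^ 2) S = p • S + q • S ^ 2 := by
  rw [cfc_add (a := S) (fun x => p * x) (fun x => q * x ^ 2), cfc_const_mul_id p S,
    cfc_const_mul q (fun x => x ^ 2) S, cfc_pow (fun x => x) 2 S, cfc_id' ℝ S]

lemma Matrix.IsHermitian.smul_one_le_quadratic_iff (hS : S.IsHermitian) {r p q : ℝ} :
    r • 1 ≤ p • S + q • S ^ 2 ↔ ∀ i, r ≤ p * hS.eigenvalues i + q * hS.eigenvalues i ^ 2 := by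
  rw [← hS.cfc_quadratic, ← Algebra.algebraMap_eq_smul_one,
    algebraMap_le_cfc_iff _ _ _ (by fun_prop) hS.isSelfAdjoint,
    hS.spectrum_real_eq_range_eigenvalues, Set.forall_mem_range]

lemma Matrix.IsHermitian.quadratic_le_smul_one_iff (hS : S.IsHermitian) {r p q : ℝ} :
    p • S + q • S ^ 2 ≤ r • 1 ↔ ∀ i, p * hS.eigenvalues i + q * hS.eigenvalues i ^ 2 ≤ r := by
  rw [← hS.cfc_quadratic, ← Algebra.algebraMap_eq_smul_one,
    cfc_le_algebraMap_iff _ _ _ (by fun_prop) hS.isSelfAdjoint,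
    hS.spectrum_real_eq_range_eigenvalues, Set.forall_mem_range]

lemma Matrix.IsHermitian.toEuclideanLin_eigenvectorBasis (hS : S.IsHermitian) (i : n) :
    toEuclideanLin S (hS.eigenvectorBasis i) = hS.eigenvalues i • hS.eigenvectorBasis i := by
  ext j
  simpa using congrFun (hS.mulVec_eigenvectorBasis i) j

end Spectral

section OperatorNorms

variable {k : ℕ} {S : Matrix (Fin k) (Fin k) ℝ}

lemma Matrix.IsHermitian.norm_toEuclideanLin_eigenvectorBasis (hS : S.IsHermitian) (i : Fin k) :
    ‖LinearMap.toContinuousLinearMap (toEuclideanLin S) (hS.eigenvectorBasis i)‖ =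
      |hS.eigenvalues i| := by
  rw [LinearMap.coe_toContinuousLinearMap', hS.toEuclideanLin_eigenvectorBasis, norm_smul,
    hS.eigenvectorBasis.orthonormal.1 i, mul_one, Real.norm_eq_abs]

lemma abs_eigenvalues_le_spec (hS : S.IsHermitian) (i : Fin k) :
    |hS.eigenvalues i| ≤ spec S := by
  rw [← hS.norm_toEuclideanLin_eigenvectorBasis i]
  simpa [spec, hS.eigenvectorBasis.orthonormal.1 i] using
    (LinearMap.toContinuousLinearMap (toEuclideanLin S)).le_opNorm (hS.eigenvectorBasis i)

lemma sigMin_le_abs_eigenvalues (hS : S.IsHermitian) (i : Fin k) :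
    sigMin S ≤ |hS.eigenvalues i| := by
  refine csInf_le ⟨0, ?_⟩ ⟨hS.eigenvectorBasis i, hS.eigenvectorBasis.orthonormal.1 i,
    (hS.norm_toEuclideanLin_eigenvectorBasis i).symm⟩
  rintro _ ⟨x, -, rfl⟩
  exact norm_nonneg _

lemma le_spec_smul_one (hS : S.IsHermitian) : S ≤ spec S • 1 :=
  hS.le_smul_one_iff.mpr fun i => (le_abs_self _).trans (abs_eigenvalues_le_spec hS i)

lemma smul_one_le_of_le_sigMin (hS : S.PosSemidef) {r : ℝ} (hr : r ≤ sigMin S) : r • 1 ≤ S :=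
  hS.1.smul_one_le_iff.mpr fun i =>
    hr.trans ((sigMin_le_abs_eigenvalues hS.1 i).trans_eq (abs_of_nonneg (hS.eigenvalues_nonneg i)))

end OperatorNorms

lemma Matrix.posSemidef_tsum {ι n : Type*} [Fintype n] {f : ι → Matrix n n ℝ}
    (hf : ∀ i, (f i).PosSemidef) : (∑' i, f i).PosSemidef := by
  classical
  by_cases hsum : Summable f
  · refine .of_dotProduct_mulVec_nonneg ?_ fun x => ?_
    · exact conjTranspose_tsum.trans (tsum_congr fun i => (hf i).1)
    · let q : Matrix n n ℝ →L[ℝ] ℝ := LinearMap.toContinuousLinearMap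
        (LinearMap.applyₗ x ∘ₗ LinearMap.applyₗ x ∘ₗ (toLinearMap₂' ℝ).toLinearMap)
      have hq (M : Matrix n n ℝ) : q M = x ⬝ᵥ M *ᵥ x := toLinearMap₂'_apply' M x x
      have hterm (i : ι) : 0 ≤ q (f i) := by simpa [hq] using (hf i).dotProduct_mulVec_nonneg x
      rw [star_trivial, ← hq, q.map_tsum hsum]
      exact tsum_nonneg hterm
  · rw [tsum_eq_zero_of_not_summable hsum]
    exact .zero

lemma Pmat_posSemidef {n k : ℕ} {γ : ℝ} (A : Matrix (Fin n) (Fin n) ℝ)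
    (B : Matrix (Fin n) (Fin k) ℝ) {Q : Matrix (Fin n) (Fin n) ℝ} {R : Matrix (Fin k) (Fin k) ℝ}
    (K : Matrix (Fin k) (Fin n) ℝ) (hγ : 0 ≤ γ) (hQ : Q.PosSemidef) (hR : R.PosSemidef) :
    (Pmat γ A B Q R K).PosSemidef := by
  refine posSemidef_tsum fun t => PosSemidef.smul ?_ (pow_nonneg hγ t)
  simpa [conjTranspose_eq_transpose_of_trivial, transpose_pow] using
    (hQ.add (hR.conjTranspose_mul_mul_same K)).conjTranspose_mul_mul_same ((A - B * K) ^ t)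

section CovarianceUpdate

variable {n : Type*} [Fintype n] [DecidableEq n] {S M : Matrix n n ℝ} {c t : ℝ}

noncomputable def covUpdate (c t : ℝ) (M S : Matrix n n ℝ) : Matrix n n ℝ :=
  S - c • (S * (M - t • S⁻¹) * S)

lemma covUpdate_eq (hS : IsUnit S) : covUpdate c t M S = S - c • (S * M * S - t • S) := by
  rw [covUpdate, Matrix.mul_sub, Matrix.sub_mul, Matrix.mul_smul, Matrix.smul_mul,
    mul_nonsing_inv S ((isUnit_iff_isUnit_det S).mp hS), Matrix.one_mul]

lemma Matrix.IsHermitian.mul_mul_le_smul_sq (hS : S.IsHermitian) {m : ℝ} (hM : M ≤ m • 1) :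
    S * M * S ≤ m • S ^ 2 := by
  simpa only [star_eq_conjTranspose, hS.eq, Matrix.mul_smul, Matrix.smul_mul, Matrix.mul_one, sq]
    using star_left_conjugate_le_conjugate hM S

lemma Matrix.IsHermitian.smul_sq_le_mul_mul (hS : S.IsHermitian) (hM : t • 1 ≤ M) :
    t • S ^ 2 ≤ S * M * S := by
  simpa only [star_eq_conjTranspose, hS.eq, Matrix.mul_smul, Matrix.smul_mul, Matrix.mul_one, sq]
    using star_left_conjugate_le_conjugate hM S

lemma covUpdate_le_one (hS : S.PosDef) (hS1 : S ≤ 1) (hM : t • 1 ≤ M) (hc : 0 ≤ c)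
    (hct : c * t ≤ 1) : covUpdate c t M S ≤ 1 := by
  have hquad : (1 + c * t) • S + -(c * t) • S ^ 2 ≤ (1 : ℝ) • 1 :=
    hS.1.quadratic_le_smul_one_iff.mpr fun i => by
      have hx0 := hS.eigenvalues_pos i
      have hx1 := hS.1.le_smul_one_iff.mp (by rwa [one_smul]) i
      nlinarith [mul_nonneg (sub_nonneg.2 hx1) (sub_nonneg.2 (mul_le_one₀ hct hx0.le hx1))]
  calc covUpdate c t M S = S - c • (S * M * S - t • S) := covUpdate_eq hS.isUnit
    _ ≤ S - c • (t • S ^ 2 - t • S) := by gcongr; exact hS.1.smul_sq_le_mul_mul hM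
    _ = (1 + c * t) • S + -(c * t) • S ^ 2 := by module
    _ ≤ 1 := by simpa using hquad

lemma smul_one_le_covUpdate {a m : ℝ} (hS : S.PosDef) (haS : a • 1 ≤ S) (hS1 : S ≤ 1)
    (hM : M ≤ m • 1) (ha : 0 < a) (hc : 0 ≤ c) (hma : m * a ≤ t) (hct : c * t ≤ a ^ 2) :
    a • 1 ≤ covUpdate c t M S := by
  have hcm : c * m ≤ a := le_of_mul_le_mul_right (by nlinarith) ha
  have hquad : a • 1 ≤ (1 + c * t) • S + -(c * m) • S ^ 2 :=
    hS.1.smul_one_le_quadratic_iff.mpr fun i => by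
      have hax := hS.1.smul_one_le_iff.mp haS i
      have hx1 := hS.1.le_smul_one_iff.mp (by rwa [one_smul]) i
      have hcmx : c * m * hS.1.eigenvalues i ≤ 1 := by nlinarith
      nlinarith [mul_nonneg (sub_nonneg.2 hax) (sub_nonneg.2 hcmx),
        mul_nonneg (mul_nonneg hc (ha.le.trans hax)) (sub_nonneg.2 hma)]
  calc a • 1 ≤ (1 + c * t) • S + -(c * m) • S ^ 2 := hquad
    _ = S - c • (m • S ^ 2 - t • S) := by module
    _ ≤ S - c • (S * M * S - t • S) := by gcongr; exact hS.1.mul_mul_le_smul_sq hM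
    _ = covUpdate c t M S := (covUpdate_eq hS.isUnit).symm

end CovarianceUpdate

theorem stmt6_general (n k : ℕ) (hk : 0 < k)
    (γ τ : ℝ) (hγ0 : 0 < γ) (hγ1 : γ < 1) (hτ0 : 0 < τ)
    (A : Matrix (Fin n) (Fin n) ℝ) (B : Matrix (Fin n) (Fin k) ℝ)
    (Q : Matrix (Fin n) (Fin n) ℝ) (hQ : Q.PosSemidef)
    (R : Matrix (Fin k) (Fin k) ℝ) (hR : R.PosDef)
    (K : Matrix (Fin k) (Fin n) ℝ)
    (Sg : Matrix (Fin k) (Fin k) ℝ) (hSg : Sg.PosDef)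
    (hSgI : loewner Sg (1 : Matrix (Fin k) (Fin k) ℝ))
    (hτR : τ ≤ 2 * sigMin R)
    (a : ℝ) (ha0 : 0 < a)
    (ha : a < min (τ / (2 * spec (R + γ • (Bᵀ * Pmat γ A B Q R K * B)))) (sigMin Sg))
    (η : ℝ) (hη0 : 0 < η) (hη : η ≤ 2 * (1 - γ) * a ^ 2 / τ)
    (Sg' : Matrix (Fin k) (Fin k) ℝ)
    (hSg'def : Sg' = Sg - (η / (1 - γ)) •
      (Sg * ((R + γ • (Bᵀ * Pmat γ A B Q R K * B)) - (τ / 2) • Sg⁻¹) * Sg)) :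
    loewner (a • (1 : Matrix (Fin k) (Fin k) ℝ)) Sg' ∧
      loewner Sg' (1 : Matrix (Fin k) (Fin k) ℝ) := by
  obtain ⟨haM, haSg⟩ := lt_min_iff.mp ha
  set M := R + γ • (Bᵀ * Pmat γ A B Q R K * B)
  set c := η / (1 - γ)
  have hBPB : (γ • (Bᵀ * Pmat γ A B Q R K * B)).PosSemidef := by
    simpa [conjTranspose_eq_transpose_of_trivial] using
      ((Pmat_posSemidef A B K hγ0.le hQ hR.posSemidef).conjTranspose_mul_mul_same B).smul hγ0.le
  have hM : (τ / 2) • 1 ≤ M := (smul_one_le_of_le_sigMin hR.posSemidef (by linarith)).trans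
    (le_add_of_nonneg_right hBPB.nonneg)
  have hSg_ge : a • 1 ≤ Sg := smul_one_le_of_le_sigMin hSg.posSemidef haSg.le
  have ha1 : a ≤ 1 := (hSg.1.smul_one_le_iff.mp hSg_ge ⟨0, hk⟩).trans
    (hSg.1.le_smul_one_iff.mp (by rwa [one_smul]) ⟨0, hk⟩)
  have hspecM : 0 < spec M := by
    by_contra! h
    rw [le_antisymm h (norm_nonneg _), mul_zero, div_zero] at haM
    linarith
  have hma : spec M * a ≤ τ / 2 := by
    have := (lt_div_iff₀ (by positivity)).mp haM
    linarith
  have hc : 0 ≤ c := div_nonneg hη0.le (by linarith)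
  have hct : c * (τ / 2) ≤ a ^ 2 := by
    rw [le_div_iff₀ hτ0] at hη
    rw [div_mul_eq_mul_div, div_le_iff₀ (by linarith)]
    linarith
  subst hSg'def
  exact ⟨smul_one_le_covUpdate hSg hSg_ge hSgI (le_spec_smul_one (hR.1.add hBPB.1)) ha0 hc hma
    hct, covUpdate_le_one hSg hSgI hM hc (hct.trans (pow_le_one₀ ha0.le ha1))⟩

/-- Boundedness of the covariance update of regularized policy gradient:
the updated covariance stays between `a•I` and `I`. -/
theorem stmt6 (n k : ℕ) (hn : 0 < n) (hk : 0 < k)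
    (γ τ : ℝ) (hγ0 : 0 < γ) (hγ1 : γ < 1) (hτ0 : 0 < τ)
    (A : Matrix (Fin n) (Fin n) ℝ) (B : Matrix (Fin n) (Fin k) ℝ)
    (Q : Matrix (Fin n) (Fin n) ℝ) (hQ : Q.PosSemidef)
    (R : Matrix (Fin k) (Fin k) ℝ) (hR : R.PosDef)
    (K : Matrix (Fin k) (Fin n) ℝ) (hK : spec (A - B * K) < 1 / Real.sqrt γ)
    (Sg : Matrix (Fin k) (Fin k) ℝ) (hSg : Sg.PosDef)
    (hSgI : loewner Sg (1 : Matrix (Fin k) (Fin k) ℝ))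
    (hτR : τ ≤ 2 * sigMin R)
    (a : ℝ) (ha0 : 0 < a)
    (ha : a < min (τ / (2 * spec (R + γ • (Bᵀ * Pmat γ A B Q R K * B)))) (sigMin Sg))
    (η : ℝ) (hη0 : 0 < η) (hη : η ≤ 2 * (1 - γ) * a ^ 2 / τ)
    (Sg' : Matrix (Fin k) (Fin k) ℝ)
    (hSg'def : Sg' = Sg - (η / (1 - γ)) •
      (Sg * ((R + γ • (Bᵀ * Pmat γ A B Q R K * B)) - (τ / 2) • Sg⁻¹) * Sg)) :
    loewner (a • (1 : Matrix (Fin k) (Fin k) ℝ)) Sg' ∧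
      loewner Sg' (1 : Matrix (Fin k) (Fin k) ℝ) :=
  stmt6_general n k hk γ τ hγ0 hγ1 hτ0 A B Q hQ R hR K Sg hSg hSgI hτR a ha0 ha η hη0 hη Sg' hSg'def
end

section
/- (Perturbation of the discounted state correlation matrix.) Let ρ ∈ (0,1), let K₁, K₂ ∈ ℝ^{k×n} satisfy ‖A−BK₁‖ ≤ ρ and ‖A−BK₂‖ ≤ ρ, and let Σ₁, Σ₂ ∈ ℝ^{k×k} be symmetric positive semidefinite. Then ‖S_{K₁,Σ₁} − S_{K₂,Σ₂}‖ ≤ ( ξ_{γ,ρ}·‖D₀‖ + ζ_{γ,ρ}·‖BΣ₁Bᵀ + W‖ )·2ρ‖B‖·‖K₁ − K₂‖ + ω_{γ,ρ}·‖B‖²·‖Σ₁ − Σ₂‖. -/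
/-!
With `L = A - B K` and `M = B Σ Bᵀ + W`, the summands `Y t` of `S_{K,Σ}` satisfy
`Y 0 = D₀`, `Y (t + 1) = L (Y t) Lᵀ + M`, so `S_{K,Σ}` solves the discounted Stein equation
`S = γ L S Lᵀ + (D₀ + γ / (1 - γ) M)`. If `‖L‖ ≤ ρ`, a solution of `S = γ a S b + c` with
`‖a‖, ‖b‖ ≤ ρ` obeys `‖S‖ ≤ ‖c‖ / (1 - γ ρ²)`. Subtracting the equations for `(K₁, Σ₁)` and
`(K₂, Σ₂)`, the difference `S₁ - S₂` solves such an equation with `a = L₂`, `b = L₂ᵀ` and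
`c = γ (L₁ S₁ L₁ᵀ - L₂ S₁ L₂ᵀ) + γ / (1 - γ) B (Σ₁ - Σ₂) Bᵀ`, of norm at most
`2 γ ρ ‖B‖ ‖K₁ - K₂‖ ‖S₁‖ + γ / (1 - γ) ‖B‖² ‖Σ₁ - Σ₂‖`; bounding `‖S₁‖` the same way gives
constants dominated by `ξ`, `ζ`, `ω`.
-/

open Matrix


section SteinEquation

variable {R : Type*} [NormedRing R] {a b a₁ b₁ a₂ b₂ x c c₁ c₂ S S₁ S₂ : R}
  {γ ρ : ℝ}

lemma norm_mul_mul_le_sq (ha : ‖a‖ ≤ ρ) (hb : ‖b‖ ≤ ρ) : ‖a * x * b‖ ≤ ρ ^ 2 * ‖x‖ := by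
  have hρ : 0 ≤ ρ := (norm_nonneg a).trans ha
  calc ‖a * x * b‖ ≤ ‖a‖ * ‖x‖ * ‖b‖ := norm_mul₃_le
    _ ≤ ρ * ‖x‖ * ρ := by gcongr
    _ = ρ ^ 2 * ‖x‖ := by ring

lemma norm_mul_mul_sub_mul_mul_le (ha₂ : ‖a₂‖ ≤ ρ) (hb₁ : ‖b₁‖ ≤ ρ) :
    ‖a₁ * x * b₁ - a₂ * x * b₂‖ ≤ ρ * ‖x‖ * (‖a₁ - a₂‖ + ‖b₁ - b₂‖) := by
  have hsplit : a₁ * x * b₁ - a₂ * x * b₂ = (a₁ - a₂) * x * b₁ + a₂ * x * (b₁ - b₂) := by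
    noncomm_ring
  calc ‖a₁ * x * b₁ - a₂ * x * b₂‖
      ≤ ‖a₁ - a₂‖ * ‖x‖ * ‖b₁‖ + ‖a₂‖ * ‖x‖ * ‖b₁ - b₂‖ := by
        rw [hsplit]; exact (norm_add_le _ _).trans (add_le_add norm_mul₃_le norm_mul₃_le)
    _ ≤ ‖a₁ - a₂‖ * ‖x‖ * ρ + ρ * ‖x‖ * ‖b₁ - b₂‖ := by gcongr
    _ = ρ * ‖x‖ * (‖a₁ - a₂‖ + ‖b₁ - b₂‖) := by ring

lemma norm_le_of_eq_smul_mul_mul_add [NormedAlgebra ℝ R] (hγ : 0 ≤ γ) (ha : ‖a‖ ≤ ρ)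
    (hb : ‖b‖ ≤ ρ) (hγρ : γ * ρ ^ 2 < 1) (hS : S = γ • (a * S * b) + c) :
    ‖S‖ ≤ ‖c‖ / (1 - γ * ρ ^ 2) := by
  rw [le_div_iff₀ (by linarith)]
  have hle : ‖S‖ ≤ γ * (ρ ^ 2 * ‖S‖) + ‖c‖ := by
    calc ‖S‖ = ‖γ • (a * S * b) + c‖ := congrArg norm hS
      _ ≤ γ * ‖a * S * b‖ + ‖c‖ := by
        refine (norm_add_le _ _).trans ?_
        rw [norm_smul, Real.norm_of_nonneg hγ]
      _ ≤ γ * (ρ ^ 2 * ‖S‖) + ‖c‖ := by gcongr; exact norm_mul_mul_le_sq ha hb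
  linarith

lemma norm_sub_le_of_eq_smul_mul_mul_add [NormedAlgebra ℝ R] (hγ : 0 ≤ γ) (ha₂ : ‖a₂‖ ≤ ρ)
    (hb₁ : ‖b₁‖ ≤ ρ) (hb₂ : ‖b₂‖ ≤ ρ) (hγρ : γ * ρ ^ 2 < 1)
    (hS₁ : S₁ = γ • (a₁ * S₁ * b₁) + c₁) (hS₂ : S₂ = γ • (a₂ * S₂ * b₂) + c₂) :
    ‖S₁ - S₂‖ ≤
      (γ * (ρ * ‖S₁‖ * (‖a₁ - a₂‖ + ‖b₁ - b₂‖)) + ‖c₁ - c₂‖) / (1 - γ * ρ ^ 2) := by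
  have hdiff : S₁ - S₂ = γ • (a₂ * (S₁ - S₂) * b₂) +
      (γ • (a₁ * S₁ * b₁ - a₂ * S₁ * b₂) + (c₁ - c₂)) := by
    conv_lhs => rw [hS₁, hS₂]
    simp only [mul_sub, sub_mul, smul_sub]
    abel
  refine (norm_le_of_eq_smul_mul_mul_add hγ ha₂ hb₂ hγρ hdiff).trans ?_
  gcongr
  refine (norm_add_le _ _).trans ?_
  rw [norm_smul, Real.norm_of_nonneg hγ]
  gcongr
  exact norm_mul_mul_sub_mul_mul_le ha₂ hb₁

-- With `a = A - B K`, `b = aᵀ`, `d = D₀` and `m = B Σ Bᵀ + W`, the `t`-th summand of `Smat`.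
def stateCorr (a b d m : R) (t : ℕ) : R :=
  a ^ t * d * b ^ t + ∑ s ∈ Finset.Icc 1 t, a ^ (t - s) * m * b ^ (t - s)

variable {d m : R}

@[simp]
lemma stateCorr_zero : stateCorr a b d m 0 = d := by
  simp [stateCorr]

lemma stateCorr_succ (t : ℕ) :
    stateCorr a b d m (t + 1) = a * stateCorr a b d m t * b + m := by
  have hsum : ∑ s ∈ Finset.Icc 1 (t + 1), a ^ (t + 1 - s) * m * b ^ (t + 1 - s)
      = a * (∑ s ∈ Finset.Icc 1 t, a ^ (t - s) * m * b ^ (t - s)) * b + m := by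
    rw [Finset.sum_Icc_succ_top (by omega), Finset.mul_sum, Finset.sum_mul, Nat.sub_self]
    congr 1
    · refine Finset.sum_congr rfl fun s hs => ?_
      rw [Finset.mem_Icc] at hs
      rw [show t + 1 - s = t - s + 1 by omega, pow_succ', pow_succ]
      noncomm_ring
    · simp
  rw [stateCorr, stateCorr, hsum, pow_succ', pow_succ]
  noncomm_ring

lemma norm_stateCorr_le (ha : ‖a‖ ≤ 1) (hb : ‖b‖ ≤ 1) (t : ℕ) :
    ‖stateCorr a b d m t‖ ≤ ‖d‖ + t * ‖m‖ := by
  induction t with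
  | zero => simp
  | succ t ih =>
    calc ‖stateCorr a b d m (t + 1)‖ ≤ 1 ^ 2 * ‖stateCorr a b d m t‖ + ‖m‖ := by
          rw [stateCorr_succ]
          exact (norm_add_le _ _).trans (by gcongr; exact norm_mul_mul_le_sq ha hb)
      _ ≤ ‖d‖ + (t + 1 : ℕ) * ‖m‖ := by push_cast; linarith

variable [NormedAlgebra ℝ R] [CompleteSpace R]

lemma tsum_smul_stateCorr_eq (hγ₀ : 0 ≤ γ) (hγ₁ : γ < 1) (ha : ‖a‖ ≤ 1) (hb : ‖b‖ ≤ 1) :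
    ∑' t, γ ^ t • stateCorr a b d m t =
      γ • (a * (∑' t, γ ^ t • stateCorr a b d m t) * b) + (d + (γ * (1 - γ)⁻¹) • m) := by
  set f : ℕ → R := fun t => γ ^ t • stateCorr a b d m t
  have hf : Summable f := by
    refine Summable.of_norm_bounded (g := fun t : ℕ => γ ^ t * (‖d‖ + t * ‖m‖)) ?_ fun t => ?_
    · have hgeom := summable_geometric_of_lt_one hγ₀ hγ₁
      have harith := summable_pow_mul_geometric_of_norm_lt_one 1
        (by rwa [Real.norm_of_nonneg hγ₀] : ‖γ‖ < 1)
      refine ((hgeom.mul_left ‖d‖).add (harith.mul_left ‖m‖)).congr fun t => ?_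
      simp only [pow_one]
      ring
    · rw [norm_smul, Real.norm_of_nonneg (by positivity)]
      gcongr
      exact norm_stateCorr_le ha hb t
  have hshift : HasSum (fun t => f (t + 1)) (∑' t, f t - d) := by
    simpa [f] using (hasSum_nat_add_iff' 1).mpr hf.hasSum
  have hstep (t : ℕ) : f (t + 1) = γ • (a * f t * b) + (γ * γ ^ t) • m := by
    simp only [f, stateCorr_succ, smul_add, mul_smul_comm, smul_mul_assoc, pow_succ', mul_smul]
  have hrec : HasSum (fun t => f (t + 1))
      (γ • (a * (∑' t, f t) * b) + (γ * (1 - γ)⁻¹) • m) := by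
    simpa only [hstep] using ((hf.hasSum.mul_left a).mul_right b).const_smul γ |>.add
      (((hasSum_geometric_of_lt_one hγ₀ hγ₁).mul_left γ).smul_const m)
  rw [add_left_comm, ← sub_eq_iff_eq_add']
  exact hshift.unique hrec

end SteinEquation

lemma stein_perturbation_arith {γ ρ d m β κ σ : ℝ} (hγ₀ : 0 ≤ γ) (hγ₁ : γ < 1) (hρ₀ : 0 ≤ ρ)
    (hρ₁ : ρ < 1) (hd : 0 ≤ d) (hm : 0 ≤ m) (hβ : 0 ≤ β) (hκ : 0 ≤ κ) (hσ : 0 ≤ σ) :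
    (γ * (ρ * ((d + γ * (1 - γ)⁻¹ * m) / (1 - γ * ρ ^ 2)) * (β * κ + β * κ)) +
        γ * (1 - γ)⁻¹ * (β ^ 2 * σ)) / (1 - γ * ρ ^ 2) ≤
      ((1 - γ * ρ ^ 2 + γ) / (1 - γ * ρ ^ 2) ^ 2 * d +
          ((2 - ρ ^ 2) / ((1 - ρ ^ 2) ^ 2 * (1 - γ)) +
            1 / ((1 - ρ ^ 2) ^ 2 * (1 - γ * ρ ^ 2))) * m) * (2 * ρ * β) * κ +
      (1 / ((1 - ρ ^ 2) * (1 - γ)) + 1 / ((1 - ρ ^ 2) * (1 - γ * ρ ^ 2))) * β ^ 2 * σ := by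
  have hρ2 : ρ ^ 2 < 1 := by nlinarith
  have hγρ : γ * ρ ^ 2 ≤ ρ ^ 2 := by nlinarith
  have h1γ : 0 < 1 - γ := by linarith
  have h1ρ : 0 < 1 - ρ ^ 2 := by linarith
  have h1r : 0 < 1 - γ * ρ ^ 2 := by linarith
  have hd_coeff : γ / (1 - γ * ρ ^ 2) ^ 2 ≤ (1 - γ * ρ ^ 2 + γ) / (1 - γ * ρ ^ 2) ^ 2 := by
    gcongr; linarith
  have hm_coeff : γ ^ 2 / ((1 - γ) * (1 - γ * ρ ^ 2) ^ 2) ≤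
      (2 - ρ ^ 2) / ((1 - ρ ^ 2) ^ 2 * (1 - γ)) + 1 / ((1 - ρ ^ 2) ^ 2 * (1 - γ * ρ ^ 2)) := by
    calc γ ^ 2 / ((1 - γ) * (1 - γ * ρ ^ 2) ^ 2) ≤ 1 / ((1 - ρ ^ 2) ^ 2 * (1 - γ)) := by
          rw [mul_comm (1 - γ)]; gcongr; nlinarith
      _ ≤ (2 - ρ ^ 2) / ((1 - ρ ^ 2) ^ 2 * (1 - γ)) := by gcongr; linarith
      _ ≤ _ := le_add_of_nonneg_right (by positivity)
  have hσ_coeff : γ / ((1 - γ) * (1 - γ * ρ ^ 2)) ≤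
      1 / ((1 - ρ ^ 2) * (1 - γ)) + 1 / ((1 - ρ ^ 2) * (1 - γ * ρ ^ 2)) := by
    calc γ / ((1 - γ) * (1 - γ * ρ ^ 2)) ≤ 1 / ((1 - ρ ^ 2) * (1 - γ)) := by
          rw [mul_comm (1 - γ)]; gcongr
      _ ≤ _ := le_add_of_nonneg_right (by positivity)
  calc _ = (γ / (1 - γ * ρ ^ 2) ^ 2 * d + γ ^ 2 / ((1 - γ) * (1 - γ * ρ ^ 2) ^ 2) * m) *
          (2 * ρ * β) * κ + γ / ((1 - γ) * (1 - γ * ρ ^ 2)) * β ^ 2 * σ := by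
        field_simp
        ring
    _ ≤ _ := by gcongr

section L2

open scoped Matrix.Norms.L2Operator

lemma spec_eq_norm {m l : ℕ} (M : Matrix (Fin m) (Fin l) ℝ) : spec M = ‖M‖ := rfl

lemma l2_opNorm_transpose {m l : ℕ} (M : Matrix (Fin m) (Fin l) ℝ) : ‖Mᵀ‖ = ‖M‖ := by
  rw [← conjTranspose_eq_transpose_of_trivial, l2_opNorm_conjTranspose]

lemma l2_opNorm_mul_mul_transpose_le {m l : ℕ} (B : Matrix (Fin m) (Fin l) ℝ)
    (X : Matrix (Fin l) (Fin l) ℝ) : ‖B * X * Bᵀ‖ ≤ ‖B‖ ^ 2 * ‖X‖ := by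
  calc ‖B * X * Bᵀ‖ ≤ ‖B‖ * ‖X‖ * ‖Bᵀ‖ :=
        (l2_opNorm_mul _ _).trans (by gcongr; exact l2_opNorm_mul _ _)
    _ = ‖B‖ ^ 2 * ‖X‖ := by rw [l2_opNorm_transpose]; ring

variable {n k : ℕ} {γ ρ : ℝ} {A W D₀ : Matrix (Fin n) (Fin n) ℝ} {B : Matrix (Fin n) (Fin k) ℝ}
  {K K₁ K₂ : Matrix (Fin k) (Fin n) ℝ} {Sg Sg₁ Sg₂ : Matrix (Fin k) (Fin k) ℝ}

lemma Smat_eq_smul_mul_mul_add (hγ₀ : 0 ≤ γ) (hγ₁ : γ < 1) (hK : ‖A - B * K‖ ≤ 1) :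
    Smat γ A B W D₀ K Sg = γ • ((A - B * K) * Smat γ A B W D₀ K Sg * (A - B * K)ᵀ) +
      (D₀ + (γ * (1 - γ)⁻¹) • (B * Sg * Bᵀ + W)) :=
  tsum_smul_stateCorr_eq hγ₀ hγ₁ hK (by rwa [l2_opNorm_transpose])

lemma norm_Smat_le (hγ₀ : 0 ≤ γ) (hγ₁ : γ < 1) (hρ₁ : ρ < 1) (hK : ‖A - B * K‖ ≤ ρ) :
    ‖Smat γ A B W D₀ K Sg‖ ≤
      (‖D₀‖ + γ * (1 - γ)⁻¹ * ‖B * Sg * Bᵀ + W‖) / (1 - γ * ρ ^ 2) := by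
  have hρ : 0 ≤ ρ := (norm_nonneg _).trans hK
  refine (norm_le_of_eq_smul_mul_mul_add hγ₀ hK (by rwa [l2_opNorm_transpose]) (by nlinarith)
    (Smat_eq_smul_mul_mul_add hγ₀ hγ₁ (hK.trans hρ₁.le))).trans ?_
  gcongr
  · nlinarith
  · refine (norm_add_le _ _).trans ?_
    rw [norm_smul, Real.norm_of_nonneg (mul_nonneg hγ₀ (inv_nonneg.mpr (by linarith)))]

lemma norm_Smat_sub_le (hγ₀ : 0 ≤ γ) (hγ₁ : γ < 1) (hρ₁ : ρ < 1) (hK₁ : ‖A - B * K₁‖ ≤ ρ)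
    (hK₂ : ‖A - B * K₂‖ ≤ ρ) :
    ‖Smat γ A B W D₀ K₁ Sg₁ - Smat γ A B W D₀ K₂ Sg₂‖ ≤
      (γ * (ρ * ‖Smat γ A B W D₀ K₁ Sg₁‖ * (‖B‖ * ‖K₁ - K₂‖ + ‖B‖ * ‖K₁ - K₂‖)) +
        γ * (1 - γ)⁻¹ * (‖B‖ ^ 2 * ‖Sg₁ - Sg₂‖)) / (1 - γ * ρ ^ 2) := by
  have hρ : 0 ≤ ρ := (norm_nonneg _).trans hK₁
  have hc : 0 ≤ γ * (1 - γ)⁻¹ := mul_nonneg hγ₀ (inv_nonneg.mpr (by linarith))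
  have hL : ‖(A - B * K₁) - (A - B * K₂)‖ ≤ ‖B‖ * ‖K₁ - K₂‖ := by
    rw [sub_sub_sub_cancel_left, ← Matrix.mul_sub, norm_sub_rev]
    exact l2_opNorm_mul _ _
  refine (norm_sub_le_of_eq_smul_mul_mul_add hγ₀ hK₂ (by rwa [l2_opNorm_transpose])
    (by rwa [l2_opNorm_transpose]) (by nlinarith)
    (Smat_eq_smul_mul_mul_add hγ₀ hγ₁ (hK₁.trans hρ₁.le))
    (Smat_eq_smul_mul_mul_add hγ₀ hγ₁ (hK₂.trans hρ₁.le))).trans ?_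
  rw [← transpose_sub, l2_opNorm_transpose, add_sub_add_left_eq_sub, ← smul_sub,
    add_sub_add_right_eq_sub, ← Matrix.sub_mul, ← Matrix.mul_sub, norm_smul,
    Real.norm_of_nonneg hc]
  gcongr
  · nlinarith
  · exact l2_opNorm_mul_mul_transpose_le _ _

end L2

open scoped Matrix.Norms.L2Operator in
theorem stmt13_general (n k : ℕ)
    (γ : ℝ) (hγ0 : 0 < γ) (hγ1 : γ < 1)
    (A : Matrix (Fin n) (Fin n) ℝ) (B : Matrix (Fin n) (Fin k) ℝ)
    (W : Matrix (Fin n) (Fin n) ℝ)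
    (D₀ : Matrix (Fin n) (Fin n) ℝ)
    (ρ : ℝ) (hρ1 : ρ < 1)
    (K₁ K₂ : Matrix (Fin k) (Fin n) ℝ)
    (hK₁ : spec (A - B * K₁) ≤ ρ) (hK₂ : spec (A - B * K₂) ≤ ρ)
    (Sg₁ Sg₂ : Matrix (Fin k) (Fin k) ℝ) :
    spec (Smat γ A B W D₀ K₁ Sg₁ - Smat γ A B W D₀ K₂ Sg₂) ≤
      ((1 - γ * ρ ^ 2 + γ) / (1 - γ * ρ ^ 2) ^ 2 * spec D₀ +
          ((2 - ρ ^ 2) / ((1 - ρ ^ 2) ^ 2 * (1 - γ)) +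
            1 / ((1 - ρ ^ 2) ^ 2 * (1 - γ * ρ ^ 2))) * spec (B * Sg₁ * Bᵀ + W)) *
        (2 * ρ * spec B) * spec (K₁ - K₂) +
      (1 / ((1 - ρ ^ 2) * (1 - γ)) + 1 / ((1 - ρ ^ 2) * (1 - γ * ρ ^ 2))) *
        spec B ^ 2 * spec (Sg₁ - Sg₂) := by
  simp only [spec_eq_norm] at hK₁ hK₂ ⊢
  have hρ : 0 ≤ ρ := (norm_nonneg _).trans hK₁
  have hγρ : 0 < 1 - γ * ρ ^ 2 := by nlinarith
  calc _ ≤ _ := norm_Smat_sub_le hγ0.le hγ1 hρ1 hK₁ hK₂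
    _ ≤ (γ * (ρ * ((‖D₀‖ + γ * (1 - γ)⁻¹ * ‖B * Sg₁ * Bᵀ + W‖) / (1 - γ * ρ ^ 2)) *
            (‖B‖ * ‖K₁ - K₂‖ + ‖B‖ * ‖K₁ - K₂‖)) + γ * (1 - γ)⁻¹ * (‖B‖ ^ 2 * ‖Sg₁ - Sg₂‖)) /
          (1 - γ * ρ ^ 2) := by
      gcongr
      exact norm_Smat_le hγ0.le hγ1 hρ1 hK₁
    _ ≤ _ := stein_perturbation_arith hγ0.le hγ1 hρ hρ1 (norm_nonneg _) (norm_nonneg _)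
      (norm_nonneg _) (norm_nonneg _) (norm_nonneg _)

/-- Perturbation bound for the discounted state correlation matrix `S_{K,Σ}`. -/
theorem stmt13 (n k : ℕ) (hn : 0 < n) (hk : 0 < k)
    (γ : ℝ) (hγ0 : 0 < γ) (hγ1 : γ < 1)
    (A : Matrix (Fin n) (Fin n) ℝ) (B : Matrix (Fin n) (Fin k) ℝ)
    (W : Matrix (Fin n) (Fin n) ℝ) (hW : W.PosSemidef)
    (D₀ : Matrix (Fin n) (Fin n) ℝ) (hD₀ : D₀.PosSemidef)
    (ρ : ℝ) (hρ0 : 0 < ρ) (hρ1 : ρ < 1)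
    (K₁ K₂ : Matrix (Fin k) (Fin n) ℝ)
    (hK₁ : spec (A - B * K₁) ≤ ρ) (hK₂ : spec (A - B * K₂) ≤ ρ)
    (Sg₁ Sg₂ : Matrix (Fin k) (Fin k) ℝ)
    (hSg₁ : Sg₁.PosSemidef) (hSg₂ : Sg₂.PosSemidef) :
    spec (Smat γ A B W D₀ K₁ Sg₁ - Smat γ A B W D₀ K₂ Sg₂) ≤
      ((1 - γ * ρ ^ 2 + γ) / (1 - γ * ρ ^ 2) ^ 2 * spec D₀ +
          ((2 - ρ ^ 2) / ((1 - ρ ^ 2) ^ 2 * (1 - γ)) +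
            1 / ((1 - ρ ^ 2) ^ 2 * (1 - γ * ρ ^ 2))) * spec (B * Sg₁ * Bᵀ + W)) *
        (2 * ρ * spec B) * spec (K₁ - K₂) +
      (1 / ((1 - ρ ^ 2) * (1 - γ)) + 1 / ((1 - ρ ^ 2) * (1 - γ * ρ ^ 2))) *
        spec B ^ 2 * spec (Sg₁ - Sg₂) :=
  stmt13_general n k γ hγ0 hγ1 A B W D₀ ρ hρ1 K₁ K₂ hK₁ hK₂ Sg₁ Sg₂
end
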